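/- arXiv:math/0401163 — 9 statements merged into one kernel-verified Lean document; each statement's English description precedes it below -/
import Mathlib

section
/- Let r be a natural number and let A be a (2r)×(2r) matrix with integer entries. Then A is integrally null-cobordant if and only if A, regarded as a matrix over ℚ, is rationally null-cobordant. -/
/-!
Over `ℚ`, the first `r` columns of `P` span a totally isotropic subspace `V` of dimension `r`.
Its integer points `N = V ∩ ℤ^(2r)` form a saturated lattice: `ℤ^(2r) ⧸ N` is torsion free,
hence free, so `N` is a direct summand, and clearing denominators in the columns of `P` shows
`rank N ≥ r`. A basis of `ℤ^(2r)` that begins with a basis of `N` is the required unimodular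
change of basis. The converse is base change along `ℤ → ℚ`.
-/

open Matrix

/-- A square matrix over a commutative ring is *null-cobordant* if its size is even,
say `n = 2 * r`, and it is congruent, via a matrix `P` with unit determinant, to a
block matrix whose upper-left `r × r` block is zero. -/
def Matrix.IsNullCobordant {R : Type*} [CommRing R] {n : ℕ}
    (A : Matrix (Fin n) (Fin n) R) : Prop :=
  ∃ r : ℕ, n = 2 * r ∧ ∃ P : Matrix (Fin n) (Fin n) R, IsUnit P.det ∧
    ∀ i j : Fin n, (i : ℕ) < r → (j : ℕ) < r → (Pᵀ * A * P) i j = 0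

/-- The block sum `A ⊞ B` of square matrices: the block-diagonal matrix `[[A,0],[0,B]]`. -/
def Matrix.blockSum {R : Type*} [CommRing R] {p q : ℕ}
    (A : Matrix (Fin p) (Fin p) R) (B : Matrix (Fin q) (Fin q) R) :
    Matrix (Fin (p + q)) (Fin (p + q)) R :=
  Matrix.reindex finSumFinEquiv finSumFinEquiv (Matrix.fromBlocks A 0 0 B)

open Module Submodule

namespace Matrix

variable {R : Type*} [CommRing R] {n : Type*} [Fintype n]

theorem transpose_mul_mul_apply (A P : Matrix n n R) (i j : n) :
    (Pᵀ * A * P) i j = Pᵀ i ⬝ᵥ A *ᵥ Pᵀ j := by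
  rw [dotProduct_mulVec, mul_apply']
  rfl

def IsTotallyIsotropic (A : Matrix n n R) (W : Submodule R (n → R)) : Prop :=
  ∀ x ∈ W, ∀ y ∈ W, x ⬝ᵥ A *ᵥ y = 0

theorem isTotallyIsotropic_span {A : Matrix n n R} {s : Set (n → R)}
    (h : ∀ x ∈ s, ∀ y ∈ s, x ⬝ᵥ A *ᵥ y = 0) : A.IsTotallyIsotropic (span R s) := by
  intro x hx y hy
  induction hx using span_induction with
  | mem x hx =>
    induction hy using span_induction with
    | mem y hy => exact h x hx y hy
    | zero => simp
    | add y z _ _ hy hz => simp [mulVec_add, hy, hz]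
    | smul c y _ hy => simp [mulVec_smul, hy]
  | zero => simp
  | add x z _ _ hx hz => simp [add_dotProduct, hx, hz]
  | smul c x _ hx => simp [hx]

theorem IsTotallyIsotropic.comap {S : Type*} [CommRing S] [Algebra R S] [FaithfulSMul R S]
    {A : Matrix n n R} {W : Submodule S (n → S)}
    (hW : (A.map (algebraMap R S)).IsTotallyIsotropic W) :
    A.IsTotallyIsotropic
      ((W.restrictScalars R).comap ((Algebra.linearMap R S).compLeft n)) := by
  intro x hx y hy
  apply FaithfulSMul.algebraMap_injective R S
  have hmul : algebraMap R S ∘ (A *ᵥ y) = A.map (algebraMap R S) *ᵥ (algebraMap R S ∘ y) :=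
    funext (RingHom.map_mulVec _ A y)
  rw [map_zero, RingHom.map_dotProduct, hmul]
  exact hW _ hx _ hy

theorem IsNullCobordant.map {S : Type*} [CommRing S] (f : R →+* S) {m : ℕ}
    {A : Matrix (Fin m) (Fin m) R} (h : A.IsNullCobordant) : (A.map f).IsNullCobordant := by
  obtain ⟨r, hm, P, hP, hPA⟩ := h
  refine ⟨r, hm, P.map f, ?_, fun i j hi hj => ?_⟩
  · rw [← RingHom.mapMatrix_apply, ← RingHom.map_det]
    exact hP.map f
  · rw [← transpose_map, ← Matrix.map_mul, ← Matrix.map_mul, map_apply, hPA i j hi hj,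
      map_zero]

theorem isNullCobordant_of_basis {r m : ℕ} (hm : m = 2 * r) {A : Matrix (Fin m) (Fin m) R}
    (b : Basis (Fin m) R (Fin m → R))
    (hb : ∀ i j : Fin m, (i : ℕ) < r → (j : ℕ) < r → b i ⬝ᵥ A *ᵥ b j = 0) :
    A.IsNullCobordant := by
  have hcols : ((Pi.basisFun R (Fin m)).toMatrix b)ᵀ = Matrix.of b := by
    ext i k
    simp [Basis.toMatrix_apply]
  refine ⟨r, hm, (Pi.basisFun R (Fin m)).toMatrix b, ?_, fun i j hi hj => ?_⟩
  · rw [← Basis.det_apply]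
    exact (Pi.basisFun R (Fin m)).isUnit_det b
  · rw [transpose_mul_mul_apply, hcols]
    exact hb i j hi hj

end Matrix

namespace Submodule

theorem isTorsionFree_quotient_comap_restrictScalars {R K M V : Type*} [CommRing R]
    [Field K] [Algebra R K] [FaithfulSMul R K] [AddCommGroup M] [Module R M] [AddCommGroup V]
    [Module K V] [Module R V] [IsScalarTower R K V] (f : M →ₗ[R] V) (W : Submodule K V) :
    Module.IsTorsionFree R (M ⧸ (W.restrictScalars R).comap f) := by
  have := (algebraMap R K).domain_nontrivial
  refine .of_smul_eq_zero fun c x hcx => or_iff_not_imp_left.2 fun hc => ?_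
  obtain ⟨x, rfl⟩ := mkQ_surjective _ x
  have hc' : algebraMap R K c ≠ 0 :=
    (map_ne_zero_iff _ (FaithfulSMul.algebraMap_injective R K)).2 hc
  rw [← map_smul, mkQ_apply, Quotient.mk_eq_zero] at hcx
  rw [mkQ_apply, Quotient.mk_eq_zero]
  rwa [mem_comap, restrictScalars_mem, map_smul, ← algebraMap_smul K, smul_mem_iff _ hc'] at hcx

theorem exists_isCompl_of_isTorsionFree_quotient {R M : Type*} [CommRing R] [IsDomain R]
    [IsPrincipalIdealRing R] [AddCommGroup M] [Module R M] [Module.Finite R M]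
    (N : Submodule R M) [Module.IsTorsionFree R (M ⧸ N)] :
    ∃ C : Submodule R M, IsCompl N C := by
  obtain ⟨s, hs⟩ := N.mkQ.exists_rightInverse_of_surjective N.range_mkQ
  have hidem : IsIdempotentElem (s ∘ₗ N.mkQ) := by
    rw [IsIdempotentElem, Module.End.mul_eq_comp, LinearMap.comp_assoc,
      ← LinearMap.comp_assoc N.mkQ, hs, LinearMap.id_comp]
  have hker : LinearMap.ker (s ∘ₗ N.mkQ) = N := by
    rw [LinearMap.ker_comp_of_ker_eq_bot _ (LinearMap.ker_eq_bot_of_inverse hs), ker_mkQ]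
  exact ⟨_, hker ▸ (LinearMap.IsIdempotentElem.isCompl hidem).symm⟩

theorem exists_basis_of_isCompl {R M : Type*} [CommRing R] [IsDomain R] [IsPrincipalIdealRing R]
    [AddCommGroup M] [Module R M] [Module.Free R M] [Module.Finite R M] {m : ℕ}
    (hM : finrank R M = m) {N C : Submodule R M} (h : IsCompl N C) :
    ∃ b : Basis (Fin m) R M, ∀ i : Fin m, (i : ℕ) < finrank R N → b i ∈ N := by
  let b₀ := ((finBasis R N).prod (finBasis R C)).map (prodEquivOfIsCompl N C h)
  have hcard : finrank R N + finrank R C = m := by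
    rw [← hM, finrank_eq_card_basis b₀, Fintype.card_sum, Fintype.card_fin, Fintype.card_fin]
  refine ⟨b₀.reindex (finSumFinEquiv.trans (finCongr hcard)), fun i hi => ?_⟩
  have : finSumFinEquiv.symm (Fin.cast hcard.symm i) = Sum.inl ⟨i, hi⟩ := by
    rw [show Fin.cast hcard.symm i = Fin.castAdd _ ⟨i, hi⟩ from Fin.ext rfl,
      finSumFinEquiv_symm_apply_castAdd]
  simp [b₀, this]

end Submodule

theorem LinearIndependent.card_le_finrank_comap_restrictScalars {R K ι n : Type*} [CommRing R]
    [IsDomain R] [IsNoetherianRing R] [Field K] [Algebra R K] [IsFractionRing R K] [Fintype ι]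
    [Fintype n] {W : Submodule K (n → K)} {v : ι → n → K} (hv : LinearIndependent K v)
    (hvW : ∀ i, v i ∈ W) :
    Fintype.card ι ≤
      finrank R ((W.restrictScalars R).comap ((Algebra.linearMap R K).compLeft n)) := by
  obtain ⟨d, hd⟩ := IsLocalization.exist_integer_multiples_of_finite (nonZeroDivisors R)
    fun p : ι × n => v p.1 p.2
  choose w hw using hd
  have hd0 : algebraMap R K d ≠ 0 :=
    IsFractionRing.to_map_ne_zero_of_mem_nonZeroDivisors d.2
  have hw_cast : ∀ i,
      (Algebra.linearMap R K).compLeft n (fun k => w (i, k)) = algebraMap R K d • v i := by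
    intro i
    ext k
    simp [hw (i, k), Algebra.smul_def]
  let w' : ι → (W.restrictScalars R).comap ((Algebra.linearMap R K).compLeft n) :=
    fun i => ⟨fun k => w (i, k), by simpa [hw_cast] using W.smul_mem (algebraMap R K d) (hvW i)⟩
  have hw' : LinearIndependent R w' := by
    refine .of_comp (((Algebra.linearMap R K).compLeft n) ∘ₗ Submodule.subtype _) ?_
    have := (hv.units_smul fun _ => Units.mk0 _ hd0).restrict_scalars' R
    convert this using 1
    ext i
    simp [w', hw, Algebra.smul_def]
  exact hw'.fintype_card_le_finrank

theorem Matrix.IsNullCobordant.of_map_algebraMap {R K : Type*} [CommRing R] [IsDomain R]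
    [IsPrincipalIdealRing R] [Field K] [Algebra R K] [IsFractionRing R K] {m : ℕ}
    {A : Matrix (Fin m) (Fin m) R} (h : (A.map (algebraMap R K)).IsNullCobordant) :
    A.IsNullCobordant := by
  obtain ⟨r, hm, P, hP, hPA⟩ := h
  let v : Fin r → Fin m → K := fun i => Pᵀ (Fin.castLE (by omega) i)
  let V := span K (Set.range v)
  let N := (V.restrictScalars R).comap ((Algebra.linearMap R K).compLeft (Fin m))
  have hV : (A.map (algebraMap R K)).IsTotallyIsotropic V := by
    refine isTotallyIsotropic_span (s := Set.range v) ?_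
    rintro _ ⟨i, rfl⟩ _ ⟨j, rfl⟩
    rw [← transpose_mul_mul_apply]
    exact hPA _ _ (by simp) (by simp)
  have hv : LinearIndependent K v :=
    (linearIndependent_cols_iff_isUnit.2 ((isUnit_iff_isUnit_det P).2 hP)).comp _
      (Fin.castLE_injective _)
  have hrank : r ≤ finrank R N := by
    simpa using hv.card_le_finrank_comap_restrictScalars (W := V) fun i => subset_span ⟨i, rfl⟩
  have := isTorsionFree_quotient_comap_restrictScalars ((Algebra.linearMap R K).compLeft (Fin m)) V
  obtain ⟨C, hNC⟩ := N.exists_isCompl_of_isTorsionFree_quotient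
  obtain ⟨b, hb⟩ := exists_basis_of_isCompl (finrank_fin_fun R) hNC
  exact isNullCobordant_of_basis hm b fun i j hi hj =>
    hV.comap _ (hb i (by omega)) _ (hb j (by omega))

/-- An integer matrix of even size is integrally null-cobordant if and only if it is
rationally null-cobordant (as a matrix over `ℚ`). -/
theorem int_nullCobordant_iff_rat_nullCobordant (r : ℕ)
    (A : Matrix (Fin (2 * r)) (Fin (2 * r)) ℤ) :
    A.IsNullCobordant ↔ (A.map (Int.cast : ℤ → ℚ)).IsNullCobordant :=
  ⟨IsNullCobordant.map (Int.castRingHom ℚ), IsNullCobordant.of_map_algebraMap (K := ℚ)⟩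
end

section
/- Let B be a k×k rational matrix, x ∈ ℚ, u a 1×k rational row vector, and v a k×1 rational column vector. Let A be the (k+2)×(k+2) rational matrix given in block form (with respect to the decomposition k+2 = 1+1+k) by A = [[0,0,0],[1,x,u],[0,v,B]] (first row identically zero; second row beginning 1, x and continuing with u; remaining rows having first entry 0, second column entries v, and remaining block B). Then A ⊞ (−B) is rationally null-cobordant; that is, a rational row enlargement A of B is rationally cobordant to B. -/
open Matrix

/-!
Write `e₀, e₁, f_j` for the basis of `A` and `g_j` for that of `-B`. The form `A ⊞ (-B)`
vanishes on the span of `e₀` and the diagonal vectors `f_j + g_j`: the first row of `A` is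
zero, its first column is `e₁`, and `B_ij - B_ij = 0`. This isotropic subspace has dimension
`k + 1`, half of `2k + 2`, and the shear `f_j ↦ f_j + g_j` is a unimodular change of basis
exhibiting it.
-/

theorem Set.exists_equiv_fin_castAdd_mem {ι : Type*} [Fintype ι] (s : Set ι) {r m : ℕ}
    (hs : Nat.card s = r) (hι : Nat.card ι = r + m) :
    ∃ g : Fin (r + m) ≃ ι, ∀ i : Fin r, g (Fin.castAdd m i) ∈ s := by
  classical
  rw [Nat.card_eq_fintype_card] at hs hι
  have hsc : Fintype.card ↥sᶜ = m := by rw [Fintype.card_compl_set]; omega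
  exact ⟨finSumFinEquiv.symm.trans
      ((Equiv.sumCongr (Fintype.equivFinOfCardEq hs).symm (Fintype.equivFinOfCardEq hsc).symm).trans
        (Equiv.Set.sumCompl s)),
    fun i => by simp⟩

namespace Matrix

variable {R : Type*} [CommRing R]

theorem isNullCobordant_reindex_of_isotropic {ι α : Type*} [Fintype ι] [DecidableEq ι]
    [Fintype α] {n : ℕ} (e : ι ≃ Fin n) (hn : n = 2 * Fintype.card α) (A P : Matrix ι ι R)
    (hP : IsUnit P.det) (f : α ↪ ι) (hf : ∀ a b, (Pᵀ * A * P) (f a) (f b) = 0) :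
    (reindex e e A).IsNullCobordant := by
  set r := Fintype.card α
  obtain ⟨g, hg⟩ := Set.exists_equiv_fin_castAdd_mem (Set.range f) (r := r) (m := r)
    ((Nat.card_congr (Equiv.ofInjective f f.injective)).symm.trans Nat.card_eq_fintype_card)
    (by rw [Nat.card_congr e, Nat.card_eq_fintype_card, Fintype.card_fin]; omega)
  set g' : Fin n ≃ ι := (finCongr (hn.trans (two_mul r))).trans g
  refine ⟨r, hn, P.submatrix e.symm g', ?_, fun i j hi hj => ?_⟩
  · have hperm : P.submatrix e.symm g' = (P.submatrix id (e.trans g')).submatrix e.symm e.symm := by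
      ext i j; simp
    rw [hperm, det_submatrix_equiv_self, det_permute']
    exact (Units.isUnit _).map (Int.castRingHom R) |>.mul hP
  · have hmem : ∀ i : Fin n, (i : ℕ) < r → g' i ∈ Set.range f := fun i hi =>
      (congrArg g (Fin.ext rfl) : g' i = g (Fin.castAdd r ⟨i, hi⟩)) ▸ hg ⟨i, hi⟩
    obtain ⟨a, ha⟩ := hmem i hi
    obtain ⟨b, hb⟩ := hmem j hj
    rw [reindex_apply, transpose_submatrix, submatrix_mul_equiv, submatrix_mul_equiv]
    simpa [ha, hb] using hf a b

theorem blockSum_reindex {ι : Type*} {p q : ℕ} (e : ι ≃ Fin p) (A : Matrix ι ι R)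
    (B : Matrix (Fin q) (Fin q) R) :
    (reindex e e A).blockSum B =
      reindex ((e.sumCongr (Equiv.refl _)).trans finSumFinEquiv)
        ((e.sumCongr (Equiv.refl _)).trans finSumFinEquiv) (fromBlocks A 0 0 B) := by
  ext i j
  rcases h₁ : finSumFinEquiv.symm i with a | a <;> rcases h₂ : finSumFinEquiv.symm j with b | b <;>
    simp [blockSum, h₁, h₂]

section Shear

variable (ι κ : Type*) [DecidableEq ι] [DecidableEq κ]

/-- The identity, except that the column of `inl (inr j)` is `e (inl (inr j)) + e (inr j)`. -/
def sumDiagShear : Matrix ((ι ⊕ κ) ⊕ κ) ((ι ⊕ κ) ⊕ κ) R :=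
  fromBlocks 1 0 (fromCols 0 1) 1

variable [Fintype ι] [Fintype κ]

theorem det_sumDiagShear : (sumDiagShear ι κ : Matrix _ _ R).det = 1 := by
  simp [sumDiagShear]

variable {ι κ}

theorem toBlocks₁₁_transpose_sumDiagShear_mul_mul (A₁₁ : Matrix ι ι R) (A₁₂ : Matrix ι κ R)
    (A₂₁ : Matrix κ ι R) (B : Matrix κ κ R) :
    ((sumDiagShear ι κ)ᵀ * fromBlocks (fromBlocks A₁₁ A₁₂ A₂₁ B) 0 0 (-B) *
      sumDiagShear ι κ).toBlocks₁₁ = fromBlocks A₁₁ A₁₂ A₂₁ 0 := by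
  simp only [sumDiagShear, fromBlocks_transpose, transpose_one, transpose_fromCols, transpose_zero,
    fromBlocks_multiply, one_mul, Matrix.mul_zero, add_zero, Matrix.mul_neg, fromRows_mul,
    Matrix.zero_mul, fromRows_neg, neg_zero, zero_add, mul_neg, mul_one, mul_fromCols,
    Matrix.mul_one, Matrix.neg_mul, fromCols_neg, toBlocks_fromBlocks₁₁]
  ext (i | i) (j | j) <;> simp

end Shear

end Matrix

/-- A rational row enlargement `A = [[0,0,0],[1,x,u],[0,v,B]]` (blocks of sizes `1 + 1 + k`)
of a square rational matrix `B` is rationally cobordant to `B`: the block sum `A ⊞ (−B)`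
is rationally null-cobordant. -/
theorem row_enlargement_cobordant (k : ℕ) (B : Matrix (Fin k) (Fin k) ℚ)
    (x : ℚ) (u v : Fin k → ℚ) :
    ((Matrix.reindex finSumFinEquiv finSumFinEquiv
        (Matrix.fromBlocks !![0, 0; 1, x]
          (Matrix.of fun (i : Fin 2) j => if i = 0 then 0 else u j)
          (Matrix.of fun i (j : Fin 2) => if j = 0 then 0 else v i)
          B)).blockSum (-B)).IsNullCobordant := by
  rw [blockSum_reindex]
  refine isNullCobordant_reindex_of_isotropic _ (α := Unit ⊕ Fin k) (by simp; ring) _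
    (sumDiagShear _ _) (by simp [det_sumDiagShear])
    (((Function.Embedding.punit 0).sumMap (.refl _)).trans .inl) ?_
  have hcongr := congrFun₂ (toBlocks₁₁_transpose_sumDiagShear_mul_mul !![0, 0; 1, x]
    (of fun (i : Fin 2) j => if i = 0 then 0 else u j)
    (of fun i (j : Fin 2) => if j = 0 then 0 else v i) B)
  rintro (⟨⟩ | a) (⟨⟩ | b) <;> exact (hcongr _ _).trans (by simp [Function.Embedding.punit])
end

section
/- Let B₀ be an r₀×r₀ rational matrix, B₁ an r₁×r₁ rational matrix, and s a natural number. Let X₁ (r₀×s), X₂ (r₁×s), X₃ (s×s), X₄ (s×r₀), X₅ (s×r₁), X₆ (s×s), X₇ (s×s) be arbitrary rational matrices, and let M be the square rational matrix of size r₀+r₁+s+s given in block form by M = [[B₀,0,0,X₁],[0,−B₁,0,X₂],[0,0,0,X₃],[X₄,X₅,X₆,X₇]], where the (3,3) diagonal block is the s×s zero matrix. Then the block sum (−B₀) ⊞ B₁ ⊞ M is rationally null-cobordant; equivalently, M is rationally cobordant to B₀ ⊞ (−B₁). -/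
open Matrix

/-!
Write `F = (−B₀) ⊞ B₁`; the upper-left block of `M` is `−F`. In `F ⊞ M` the vectors `e_v + e'_v`,
pairing each basis vector of `F` with its copy in `M`, together with the basis vectors of the third
block of `M`, span a half-dimensional subspace on which the form vanishes: on the first kind it is
`F + (−F) = 0`, and the third block of `M` has zero diagonal block and is not coupled to the first
two. After regrouping the indices as `(V ⊕ S) ⊕ (V ⊕ S)`, the shear `[[1, 0], [diag(1, 0), 1]]`
carries the first half of the standard basis onto this subspace.
-/

namespace Matrix

variable {R : Type*} [CommRing R] {ι κ : Type*} [Fintype ι] [Fintype κ]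
  [DecidableEq ι] [DecidableEq κ]

theorem isNullCobordant_submatrix_of_toBlocks₁₁_eq_zero {n : ℕ}
    (A Q : Matrix (ι ⊕ κ) (ι ⊕ κ) R) (hQ : IsUnit Q.det) (hA : (Qᵀ * A * Q).toBlocks₁₁ = 0)
    (hcard : Fintype.card ι = Fintype.card κ) (f : Fin n ≃ ι ⊕ κ) :
    (A.submatrix f f).IsNullCobordant := by
  set r := Fintype.card ι
  have hn : n = r + r := by
    simpa only [Fintype.card_fin, Fintype.card_sum, ← hcard] using Fintype.card_congr f
  let e : Fin n ≃ ι ⊕ κ := (finCongr hn).trans (finSumFinEquiv.symm.trans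
    (Equiv.sumCongr (Fintype.equivFin ι).symm (Fintype.equivFinOfCardEq hcard.symm).symm))
  refine ⟨r, by omega, Q.submatrix f e, ?_, fun i j hi hj => ?_⟩
  · refine isUnit_det_of_right_inverse (B := Q⁻¹.submatrix e f) ?_
    rw [submatrix_mul_equiv, mul_nonsing_inv _ hQ, submatrix_one_equiv]
  · have he : ∀ k : Fin n, (k : ℕ) < r → ∃ x : ι, e k = Sum.inl x := fun k hk =>
      ⟨_, congrArg _ (finSumFinEquiv_symm_apply_castAdd (⟨k, hk⟩ : Fin r))⟩
    obtain ⟨x, hx⟩ := he i hi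
    obtain ⟨y, hy⟩ := he j hj
    rw [transpose_submatrix, submatrix_mul_equiv, submatrix_mul_equiv, submatrix_apply, hx, hy]
    exact congrFun (congrFun hA x) y

theorem toBlocks₁₁_transpose_mul_mul_fromBlocks_one_zero (A : Matrix (ι ⊕ κ) (ι ⊕ κ) R)
    (T : Matrix κ ι R) :
    ((fromBlocks 1 0 T 1)ᵀ * A * fromBlocks 1 0 T 1).toBlocks₁₁
      = A.toBlocks₁₁ + A.toBlocks₁₂ * T + Tᵀ * A.toBlocks₂₁ + Tᵀ * A.toBlocks₂₂ * T := by
  conv_lhs => rw [← fromBlocks_toBlocks A]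
  simp only [fromBlocks_transpose, fromBlocks_multiply, toBlocks_fromBlocks₁₁]
  simp [Matrix.add_mul, Matrix.mul_assoc]
  abel

theorem isNullCobordant_submatrix_of_metabolic {V S : Type*} [Fintype V] [Fintype S]
    [DecidableEq V] [DecidableEq S] {n : ℕ} (F : Matrix V V R) (Y : Matrix V S R)
    (Z : Matrix S V R) (X₃ X₆ X₇ : Matrix S S R) (f : Fin n ≃ (V ⊕ S) ⊕ (V ⊕ S)) :
    ((fromBlocks (fromBlocks (-F) 0 0 0) (fromBlocks 0 0 0 X₃) (fromBlocks 0 0 0 X₆)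
      (fromBlocks F Y Z X₇)).submatrix f f).IsNullCobordant := by
  refine isNullCobordant_submatrix_of_toBlocks₁₁_eq_zero _ (fromBlocks 1 0 (fromBlocks 1 0 0 0) 1)
    (by simp) ?_ rfl f
  rw [toBlocks₁₁_transpose_mul_mul_fromBlocks_one_zero]
  simp [fromBlocks_transpose, fromBlocks_multiply, fromBlocks_add]

theorem blockSum_submatrix {p q : ℕ} {α β : Type*} (C : Matrix α α R) (M : Matrix β β R)
    (c : Fin p ≃ α) (m : Fin q ≃ β) :
    (C.submatrix c c).blockSum (M.submatrix m m)
      = (fromBlocks C 0 0 M).submatrix (finSumFinEquiv.symm.trans (Equiv.sumCongr c m))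
          (finSumFinEquiv.symm.trans (Equiv.sumCongr c m)) := by
  ext i j
  simp only [blockSum, reindex_apply, submatrix_apply, Equiv.trans_apply, Equiv.sumCongr_apply]
  rcases finSumFinEquiv.symm i with a | a <;> rcases finSumFinEquiv.symm j with b | b <;> rfl

theorem fromBlocks_zero_zero_fromBlocks_eq_submatrix {V S : Type*} (F B : Matrix V V R)
    (Y : Matrix V S R) (Z : Matrix S V R) (X₃ X₆ X₇ : Matrix S S R) :
    fromBlocks F 0 0 (fromBlocks B (fromCols 0 Y) (fromRows 0 Z) (fromBlocks 0 X₃ X₆ X₇))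
      = (fromBlocks (fromBlocks F 0 0 0) (fromBlocks 0 0 0 X₃) (fromBlocks 0 0 0 X₆)
          (fromBlocks B Y Z X₇)).submatrix
        ((Equiv.sumAssoc V V (S ⊕ S)).symm.trans (Equiv.sumSumSumComm V V S S))
        ((Equiv.sumAssoc V V (S ⊕ S)).symm.trans (Equiv.sumSumSumComm V V S S)) := by
  ext (a | b | k | k) (a | b | k | k) <;> rfl

end Matrix

/-- The Seifert matrix `M` of the sphere knot obtained by gluing two disk knots along
their common boundary, in block form `[[B₀,0,0,X₁],[0,−B₁,0,X₂],[0,0,0,X₃],[X₄,X₅,X₆,X₇]]`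
(blocks of sizes `r₀ + r₁ + s + s`), is rationally cobordant to `B₀ ⊞ (−B₁)`: the block sum
`(−B₀) ⊞ B₁ ⊞ M` is rationally null-cobordant. -/
theorem combo_matrix_cobordant (r0 r1 s : ℕ)
    (B0 : Matrix (Fin r0) (Fin r0) ℚ) (B1 : Matrix (Fin r1) (Fin r1) ℚ)
    (X1 : Matrix (Fin r0) (Fin s) ℚ) (X2 : Matrix (Fin r1) (Fin s) ℚ)
    (X3 X6 X7 : Matrix (Fin s) (Fin s) ℚ)
    (X4 : Matrix (Fin s) (Fin r0) ℚ) (X5 : Matrix (Fin s) (Fin r1) ℚ) :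
    (((-B0).blockSum B1).blockSum
      (Matrix.reindex ((Equiv.sumCongr finSumFinEquiv finSumFinEquiv).trans finSumFinEquiv)
        ((Equiv.sumCongr finSumFinEquiv finSumFinEquiv).trans finSumFinEquiv)
        (Matrix.fromBlocks
          (Matrix.fromBlocks B0 0 0 (-B1))
          (Matrix.fromBlocks 0 X1 0 X2)
          (Matrix.fromBlocks 0 0 X4 X5)
          (Matrix.fromBlocks 0 X3 X6 X7)))).IsNullCobordant := by
  set F := fromBlocks B0 0 0 (-B1)
  have hF : (-B0).blockSum B1 = (-F).submatrix finSumFinEquiv.symm finSumFinEquiv.symm := by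
    simp only [F, fromBlocks_neg, neg_neg, neg_zero]; rfl
  have hY : fromBlocks 0 X1 0 X2 = fromCols (0 : Matrix _ (Fin s) ℚ) (fromRows X1 X2) := by
    ext (_ | _) (_ | _) <;> rfl
  have hZ : fromBlocks 0 0 X4 X5 = fromRows (0 : Matrix (Fin s) _ ℚ) (fromCols X4 X5) := by
    ext (_ | _) (_ | _) <;> rfl
  rw [hF, reindex_apply, blockSum_submatrix, hY, hZ, fromBlocks_zero_zero_fromBlocks_eq_submatrix,
    submatrix_submatrix, ← Equiv.coe_trans]
  exact isNullCobordant_submatrix_of_metabolic F _ _ _ _ _ _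
end

section
/- Let B be a (2r)×(2r) rational matrix that is rationally null-cobordant and let ε ∈ {1,−1}. Then there exist a polynomial p ∈ ℚ[X] and a constant c ∈ ℚ such that for every nonzero x ∈ ℚ, det(x·B + ε·Bᵀ) = c · xʳ · p(x) · p(x⁻¹). (This is the factorization det(tB + εBᵀ) ∼ p(t)p(t⁻¹) for null-cobordant matrices, used to obstruct cobordism via Alexander polynomials.) -/
open Matrix

/-- If `B` is a rationally null-cobordant `2r × 2r` rational matrix and `ε = ±1`, then
`det (x·B + ε·Bᵀ)` factors, for all nonzero rational `x`, as `c · xʳ · p(x) · p(x⁻¹)`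
for some rational polynomial `p` and constant `c`. -/
theorem det_factorization_of_nullCobordant (r : ℕ)
    (B : Matrix (Fin (2 * r)) (Fin (2 * r)) ℚ)
    (hB : B.IsNullCobordant) (ε : ℚ) (hε : ε = 1 ∨ ε = -1) :
    ∃ (p : Polynomial ℚ) (c : ℚ), ∀ x : ℚ, x ≠ 0 →
      (x • B + ε • Bᵀ).det = c * x ^ r * p.eval x * p.eval x⁻¹ := by
  obtain ⟨s, hs, P, hP, hz⟩ := hB
  have hsr : s = r := by omega
  subst s
  have hε2 : ε * ε = 1 := by rcases hε with h | h <;> simp [h]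
  set e : Fin (2 * r) ≃ Fin r ⊕ Fin r :=
    (finCongr (two_mul r)).trans finSumFinEquiv.symm with he
  set M : Matrix (Fin (2*r)) (Fin (2*r)) ℚ := Pᵀ * B * P with hM
  set M' : Matrix (Fin r ⊕ Fin r) (Fin r ⊕ Fin r) ℚ := M.submatrix e.symm e.symm with hM'
  have h11 : M'.toBlocks₁₁ = 0 := by
    ext i j
    simp only [toBlocks₁₁, hM', of_apply, submatrix_apply, Matrix.zero_apply]
    apply hz
    · simp [he, i.isLt]
    · simp [he, j.isLt]
  set C : Matrix (Fin r) (Fin r) ℚ := M'.toBlocks₁₂ with hC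
  set D : Matrix (Fin r) (Fin r) ℚ := M'.toBlocks₂₁ with hD
  set E : Matrix (Fin r) (Fin r) ℚ := M'.toBlocks₂₂ with hE
  have hblk : M' = fromBlocks 0 C D E := by
    rw [← fromBlocks_toBlocks M', h11]
  set S : Matrix (Fin r ⊕ Fin r) (Fin r ⊕ Fin r) ℚ := fromBlocks 0 1 1 0 with hS
  set p : Polynomial ℚ :=
    ((Polynomial.X : Polynomial ℚ) • C.map Polynomial.C + Polynomial.C ε • Dᵀ.map Polynomial.C).det with hp
  refine ⟨p, (P.det ^ 2)⁻¹ * S.det * ε ^ r, ?_⟩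
  intro x hx
  -- p evaluations
  have hpeval : ∀ y : ℚ, p.eval y = (y • C + ε • Dᵀ).det := by
    intro y
    have := (Polynomial.evalRingHom y).map_det
      ((Polynomial.X : Polynomial ℚ) • C.map Polynomial.C + Polynomial.C ε • Dᵀ.map Polynomial.C)
    rw [hp]
    rw [show Polynomial.eval y = Polynomial.evalRingHom y from rfl] at *
    rw [this]
    congr 1
    ext i j
    simp [Matrix.map_apply]
    ring
  -- congruence step
  have hPdet : P.det ≠ 0 := hP.ne_zero
  have hcong : Pᵀ * (x • B + ε • Bᵀ) * P = x • M + ε • Mᵀ := by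
    rw [hM, transpose_mul, transpose_mul, transpose_transpose]
    rw [Matrix.mul_add, Matrix.add_mul]
    rw [Matrix.mul_smul, Matrix.smul_mul, Matrix.mul_smul, Matrix.smul_mul,
      Matrix.mul_assoc, Matrix.mul_assoc]
  have hdet1 : (x • B + ε • Bᵀ).det = (P.det ^ 2)⁻¹ * (x • M + ε • Mᵀ).det := by
    have h2 : (x • M + ε • Mᵀ).det = P.det ^ 2 * (x • B + ε • Bᵀ).det := by
      rw [← hcong, det_mul, det_mul, det_transpose]; ring
    rw [h2, inv_mul_cancel_left₀ (pow_ne_zero 2 hPdet)]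
  -- pass to reindexed matrix
  have hdet2 : (x • M + ε • Mᵀ).det = (x • M' + ε • M'ᵀ).det := by
    rw [hM', ← det_submatrix_equiv_self e.symm (x • M + ε • Mᵀ)]
    congr 1
  -- block form of x • M' + ε • M'ᵀ
  have hblk2 : x • M' + ε • M'ᵀ =
      fromBlocks 0 (x • C + ε • Dᵀ) (x • D + ε • Cᵀ) (x • E + ε • Eᵀ) := by
    rw [hblk, fromBlocks_transpose, fromBlocks_smul, fromBlocks_smul, fromBlocks_add]
    simp
  -- determinant of the block matrix
  have hdet3 : (fromBlocks (0 : Matrix (Fin r) (Fin r) ℚ)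
      (x • C + ε • Dᵀ) (x • D + ε • Cᵀ) (x • E + ε • Eᵀ)).det
      = S.det * ((x • D + ε • Cᵀ).det * (x • C + ε • Dᵀ).det) := by
    have hmul : fromBlocks (0 : Matrix (Fin r) (Fin r) ℚ)
        (x • C + ε • Dᵀ) (x • D + ε • Cᵀ) (x • E + ε • Eᵀ)
        = S * fromBlocks (x • D + ε • Cᵀ) (x • E + ε • Eᵀ) 0 (x • C + ε • Dᵀ) := by
      rw [hS, fromBlocks_multiply]
      simp
    rw [hmul, det_mul, det_fromBlocks_zero₂₁]
  -- key identity for det (x • D + ε • Cᵀ)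
  have hkey : (x • D + ε • Cᵀ).det = ε ^ r * x ^ r * p.eval x⁻¹ := by
    have h1 : x • (x⁻¹ • C + ε • Dᵀ) = ε • (x • Dᵀ + ε • C) := by
      rw [smul_add, smul_add, smul_smul, smul_smul, smul_smul, smul_smul]
      rw [mul_inv_cancel₀ hx, hε2]
      module
    have h2 : (x • (x⁻¹ • C + ε • Dᵀ)).det = (ε • (x • Dᵀ + ε • C)).det := by rw [h1]
    rw [det_smul, det_smul, Fintype.card_fin] at h2
    have h3' : (x • Dᵀ + ε • C) = (x • D + ε • Cᵀ)ᵀ := by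
      rw [transpose_add, transpose_smul, transpose_smul, transpose_transpose]
    have h3 : (x • Dᵀ + ε • C).det = (x • D + ε • Cᵀ).det := by rw [h3', det_transpose]
    have hεr : ε ^ r * ε ^ r = 1 := by
      rw [← mul_pow, hε2, one_pow]
    have h4 : x ^ r * (x⁻¹ • C + ε • Dᵀ).det = ε ^ r * (x • D + ε • Cᵀ).det := by
      rw [← h3]; exact h2
    calc (x • D + ε • Cᵀ).det = (ε ^ r * ε ^ r) * (x • D + ε • Cᵀ).det := by rw [hεr]; ring
      _ = ε ^ r * (ε ^ r * (x • D + ε • Cᵀ).det) := by ring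
      _ = ε ^ r * (x ^ r * (x⁻¹ • C + ε • Dᵀ).det) := by rw [← h4]
      _ = ε ^ r * x ^ r * (x⁻¹ • C + ε • Dᵀ).det := by ring
      _ = ε ^ r * x ^ r * p.eval x⁻¹ := by rw [hpeval]
  rw [hdet1, hdet2, hblk2, hdet3, hkey, hpeval x]
  ring
end

section
/- Let m be a natural number and let d ∈ ℤ[t] be a polynomial of degree at most m whose coefficients aᵢ (the coefficient of tⁱ) satisfy aᵢ = a_{m−i} for all 0 ≤ i ≤ m. If d(1) is odd, then m is even, the coefficient a_{m/2} is odd, and d(−1) is odd. -/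
lemma zmod2_odd_iff (n : ℤ) : Odd n ↔ (n : ZMod 2) = 1 := by
  have hd := ZMod.intCast_zmod_eq_zero_iff_dvd n 2
  norm_num at hd
  rw [← Int.not_even_iff_odd, even_iff_two_dvd, ← hd]
  have h : ∀ x : ZMod 2, ¬ x = 0 ↔ x = 1 := by decide
  exact h _

/-- If `d ∈ ℤ[t]` has degree at most `m`, palindromic coefficients `aᵢ = a_{m−i}` for
`0 ≤ i ≤ m`, and `d(1)` is odd, then `m` is even, the middle coefficient `a_{m/2}` is odd,
and `d(−1)` is odd. -/
theorem palindromic_odd_eval (m : ℕ) (d : Polynomial ℤ)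
    (hdeg : d.natDegree ≤ m)
    (hpal : ∀ i ≤ m, d.coeff i = d.coeff (m - i))
    (hodd : Odd (d.eval 1)) :
    Even m ∧ Odd (d.coeff (m / 2)) ∧ Odd (d.eval (-1)) := by
  have hlt : d.natDegree < m + 1 := Nat.lt_succ_of_le hdeg
  have h1 : d.eval 1 = ∑ i ∈ Finset.range (m + 1), d.coeff i := by
    rw [Polynomial.eval_eq_sum_range' hlt]; simp
  have hS : ((d.eval 1 : ℤ) : ZMod 2) = ∑ i ∈ Finset.range (m + 1), ((d.coeff i : ℤ) : ZMod 2) := by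
    rw [h1]; push_cast; ring
  have hS1 : (∑ i ∈ Finset.range (m + 1), ((d.coeff i : ℤ) : ZMod 2)) = 1 := by
    rw [← hS, ← zmod2_odd_iff]; exact hodd
  have hmeven : Even m := by
    by_contra hme
    have hmodd : Odd m := Nat.not_even_iff_odd.mp hme
    have : (∑ i ∈ Finset.range (m + 1), ((d.coeff i : ℤ) : ZMod 2)) = 0 := by
      apply Finset.sum_involution (fun i _ => m - i)
      · intro i hi
        simp only [Finset.mem_range] at hi
        rw [← hpal i (by omega)]
        exact CharTwo.add_self_eq_zero _
      · intro i hi _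
        simp only [Finset.mem_range] at hi
        obtain ⟨k, hk⟩ := hmodd
        omega
      · intro i hi
        simp only [Finset.mem_range] at hi ⊢; omega
      · intro i hi
        simp only [Finset.mem_range] at hi
        omega
    rw [this] at hS1
    exact one_ne_zero hS1.symm
  obtain ⟨k, hk⟩ := hmeven
  have hk2 : m / 2 = k := by omega
  refine ⟨⟨k, hk⟩, ?_, ?_⟩
  · have hmem : k ∈ Finset.range (m + 1) := by simp; omega
    have hsplit : (∑ i ∈ Finset.range (m + 1), ((d.coeff i : ℤ) : ZMod 2))
        = ((d.coeff k : ℤ) : ZMod 2)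
          + ∑ i ∈ (Finset.range (m + 1)).erase k, ((d.coeff i : ℤ) : ZMod 2) :=
      (Finset.add_sum_erase _ _ hmem).symm
    have hzero : (∑ i ∈ (Finset.range (m + 1)).erase k, ((d.coeff i : ℤ) : ZMod 2)) = 0 := by
      apply Finset.sum_involution (fun i _ => m - i)
      · intro i hi
        simp only [Finset.mem_erase, Finset.mem_range] at hi
        rw [← hpal i (by omega)]
        exact CharTwo.add_self_eq_zero _
      · intro i hi _
        simp only [Finset.mem_erase, Finset.mem_range] at hi
        omega
      · intro i hi
        simp only [Finset.mem_erase, Finset.mem_range] at hi ⊢; omega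
      · intro i hi
        simp only [Finset.mem_erase, Finset.mem_range] at hi
        omega
    rw [hsplit, hzero, add_zero] at hS1
    rw [hk2, zmod2_odd_iff]
    exact hS1
  · rw [zmod2_odd_iff]
    have e1 : ((d.eval (-1) : ℤ) : ZMod 2) = (d.map (Int.castRingHom (ZMod 2))).eval ((-1 : ℤ) : ZMod 2) := by
      rw [Polynomial.eval_intCast_map]; rfl
    have e2 : ((d.eval 1 : ℤ) : ZMod 2) = (d.map (Int.castRingHom (ZMod 2))).eval ((1 : ℤ) : ZMod 2) := by
      rw [Polynomial.eval_intCast_map]; rfl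
    have hneg : ((-1 : ℤ) : ZMod 2) = ((1 : ℤ) : ZMod 2) := by decide
    rw [e1, hneg, ← e2, ← zmod2_odd_iff]
    exact hodd
end

section
/- Let ε ∈ {1,−1}, n ≥ 2, and let V be an n×n rational matrix such that det(V + εVᵀ) ≠ 0 and det V = 0. Then there exist an invertible n×n rational matrix P, a rational column vector q of length n−2, and an (n−2)×(n−2) rational matrix W such that, with respect to the decomposition n = 1+1+(n−2), PᵀVP = [[0,0,0],[−1,0,0],[0,q,W]] (the first row is zero; the second row is (−1,0,…,0); the remaining rows have first entry 0, second-column entries q, and remaining block W). Moreover, det(W + εWᵀ) ≠ 0. -/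
/-! A left null vector `v` of `V` has `V v ≠ 0`, for otherwise it would lie in the kernel of
`V + ε Vᵀ`. Take `p` with `pᵀ V v = -1` and `pᵀ V p = 0`, and complete `v, p` by a basis of the
common kernel of `x ↦ xᵀ V v` and `x ↦ pᵀ V x`; in this basis `V` becomes
`N = singularNormalForm q W`. A column operation makes `N + ε Nᵀ` block triangular with
diagonal blocks `[[0, -ε], [-1, 0]]` and `W + ε Wᵀ`, so `det (N + ε Nᵀ) = -ε det (W + ε Wᵀ)`. -/

open Matrix Module

def singularNormalForm {R : Type*} [Ring R] {m : ℕ} (q : Fin m → R)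
    (W : Matrix (Fin m) (Fin m) R) : Matrix (Fin 2 ⊕ Fin m) (Fin 2 ⊕ Fin m) R :=
  fromBlocks !![0, 0; -1, 0] 0 (of fun i (j : Fin 2) => if j = 0 then 0 else q i) W

theorem det_singularNormalForm_add_smul_transpose {R : Type*} [CommRing R] {m : ℕ} (ε : R)
    (q : Fin m → R) (W : Matrix (Fin m) (Fin m) R) :
    (singularNormalForm q W + ε • (singularNormalForm q W)ᵀ).det = -ε * (W + ε • Wᵀ).det := by
  set C : Matrix (Fin m) (Fin 2) R := of fun i j => if j = 0 then 0 else q i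
  have hclear : (singularNormalForm q W + ε • (singularNormalForm q W)ᵀ) *
      fromBlocks 1 (of fun i k => if i = 0 then ε * q k else 0) 0 1 =
      fromBlocks !![0, -ε; -1, 0] 0 C (W + ε • Wᵀ) := by
    simp only [singularNormalForm, fromBlocks_transpose, fromBlocks_smul, fromBlocks_add,
      fromBlocks_multiply]
    congr 1
    · ext i j; fin_cases i <;> fin_cases j <;> simp
    · ext i j; fin_cases i <;> simp [mul_apply]
    · ext i j; fin_cases j <;> simp [C]
    · ext i j; simp [mul_apply]
  have := congrArg det hclear
  rwa [det_mul, det_fromBlocks_zero₂₁, det_fromBlocks_zero₁₂, det_one, det_one, mul_one, mul_one,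
    det_fin_two_of, zero_mul, zero_sub, neg_mul_neg, mul_one] at this

theorem Matrix.transpose_mul_add_smul_transpose_mul {R ι : Type*} [CommRing R] [Fintype ι]
    (P V : Matrix ι ι R) (ε : R) :
    Pᵀ * (V + ε • Vᵀ) * P = Pᵀ * V * P + ε • (Pᵀ * V * P)ᵀ := by
  simp [Matrix.mul_add, Matrix.add_mul, transpose_mul, Matrix.mul_assoc]

theorem Matrix.dotProduct_mulVec_eq_zero_of_vecMul_eq_zero {R ι κ : Type*} [CommSemiring R]
    [Fintype ι] [Fintype κ] {V : Matrix ι κ R} {v : ι → R} (hv : v ᵥ* V = 0) (x : κ → R) :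
    v ⬝ᵥ V *ᵥ x = 0 := by
  rw [dotProduct_mulVec, hv, zero_dotProduct]

theorem Matrix.mul_mul_transpose_apply {R ι κ : Type*} [CommSemiring R] [Fintype ι]
    (A : Matrix κ ι R) (V : Matrix ι ι R) (a b : κ) :
    (A * V * Aᵀ) a b = A a ⬝ᵥ V *ᵥ A b := by
  rw [dotProduct_mulVec]
  rfl

section
variable {K ι : Type*} [Field K] [Fintype ι] [DecidableEq ι]

theorem exists_dotProduct_mulVec_eq_neg_one_of_vecMul_eq_zero {V : Matrix ι ι K} {v : ι → K}
    (hv : v ᵥ* V = 0) (hVv : V *ᵥ v ≠ 0) :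
    ∃ p, p ⬝ᵥ V *ᵥ v = -1 ∧ p ⬝ᵥ V *ᵥ p = 0 := by
  have hvV := dotProduct_mulVec_eq_zero_of_vecMul_eq_zero hv
  obtain ⟨i, hi⟩ : ∃ i, (V *ᵥ v) i ≠ 0 := Function.ne_iff.1 hVv
  set u : ι → K := Pi.single i (-((V *ᵥ v) i)⁻¹)
  have hu : u ⬝ᵥ V *ᵥ v = -1 := by simp [u, single_dotProduct, hi]
  -- as `vᵀ V = 0`, `(u + t v)ᵀ V (u + t v) = uᵀ V u - t`
  refine ⟨u + (u ⬝ᵥ V *ᵥ u) • v, ?_, ?_⟩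
  · simp [add_dotProduct, hu, hvV]
  · simp [mulVec_add, mulVec_smul, dotProduct_add, add_dotProduct, hu, hvV]

theorem exists_linearIndependent_mul_mul_transpose_eq_singularNormalForm {m : ℕ}
    {V : Matrix ι ι K} {v : ι → K} (hv : v ᵥ* V = 0) (hVv : V *ᵥ v ≠ 0)
    (hm : m + 2 ≤ Fintype.card ι) :
    ∃ (A : Matrix (Fin 2 ⊕ Fin m) ι K) (q : Fin m → K) (W : Matrix (Fin m) (Fin m) K),
      LinearIndependent K A.row ∧ A * V * Aᵀ = singularNormalForm q W := by
  have hvV := dotProduct_mulVec_eq_zero_of_vecMul_eq_zero hv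
  obtain ⟨p, hpv, hpp⟩ := exists_dotProduct_mulVec_eq_neg_one_of_vecMul_eq_zero hv hVv
  set g : (ι → K) →ₗ[K] Fin 2 → K := toLin' (of ![-(p ᵥ* V), -(V *ᵥ v)])
  have hg : ∀ x, g x = ![-(p ⬝ᵥ V *ᵥ x), -(x ⬝ᵥ V *ᵥ v)] := fun x => by
    ext i; fin_cases i <;> simp [g, dotProduct_mulVec, dotProduct_comm x]
  have hker : m ≤ finrank K (LinearMap.ker g) := by
    have := g.finrank_range_add_finrank_ker
    have := (LinearMap.range g).finrank_le
    simp only [finrank_fintype_fun_eq_card, Fintype.card_fin] at *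
    omega
  obtain ⟨c, hc⟩ := exists_linearIndependent_of_le_finrank hker
  have hvp : LinearIndependent K (Submodule.Quotient.mk (p := LinearMap.ker g) ∘ ![v, p]) := by
    have hstd : (LinearMap.ker g).liftQ g le_rfl ∘ Submodule.Quotient.mk ∘ ![v, p] =
        Pi.basisFun K (Fin 2) := by
      ext i j; fin_cases i <;> fin_cases j <;> simp [hg, hpv, hpp, hvV]
    refine .of_comp ((LinearMap.ker g).liftQ g le_rfl) ?_
    rw [hstd]
    exact (Pi.basisFun K (Fin 2)).linearIndependent
  set A : Matrix (Fin 2 ⊕ Fin m) ι K := Sum.elim ![v, p] fun k => c k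
  have hA : LinearIndependent K A.row := by
    have := (hc.sumElim_of_quotient _ hvp).comp Sum.swap Sum.swap_leftInverse.injective
    rwa [Sum.elim_swap] at this
  have hcv : ∀ k, (c k : ι → K) ⬝ᵥ V *ᵥ v = 0 := fun k => by
    simpa [hg] using congrFun (c k).2 1
  have hpc : ∀ k, p ⬝ᵥ V *ᵥ c k = 0 := fun k => by
    simpa [hg] using congrFun (c k).2 0
  refine ⟨A, fun k => c k ⬝ᵥ V *ᵥ p, of fun k l => c k ⬝ᵥ V *ᵥ c l, hA, ?_⟩
  ext (a | k) (b | l) <;> rw [mul_mul_transpose_apply]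
  · fin_cases a <;> fin_cases b <;> simp [A, singularNormalForm, hvV, hpv, hpp]
  · fin_cases a <;> simp [A, singularNormalForm, hvV, hpc]
  · fin_cases b <;> simp [A, singularNormalForm, hcv]
  · simp [A, singularNormalForm]
end

/-- If `V` is a singular `n × n` rational matrix (`n ≥ 2`) with `det (V + εVᵀ) ≠ 0`
(`ε = ±1`), then `V` is rationally congruent to a matrix of the block form
`[[0,0,0],[−1,0,0],[0,q,W]]` (blocks of sizes `1 + 1 + (n−2)`), where `W` again satisfies
`det (W + εWᵀ) ≠ 0`. -/
theorem singular_reduction (ε : ℚ) (n : ℕ) (hn : 2 ≤ n)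
    (V : Matrix (Fin n) (Fin n) ℚ)
    (hdet : (V + ε • Vᵀ).det ≠ 0) (hV : V.det = 0) :
    ∃ (P : Matrix (Fin n) (Fin n) ℚ) (q : Fin (n - 2) → ℚ)
      (W : Matrix (Fin (n - 2)) (Fin (n - 2)) ℚ),
      IsUnit P.det ∧
      Pᵀ * V * P =
        Matrix.reindex (finSumFinEquiv.trans (finCongr (by omega)))
          (finSumFinEquiv.trans (finCongr (by omega)))
          (Matrix.fromBlocks !![0, 0; -1, 0] 0
            (Matrix.of fun i (j : Fin 2) => if j = 0 then 0 else q i) W) ∧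
      (W + ε • Wᵀ).det ≠ 0 := by
  obtain ⟨m, rfl⟩ : ∃ m, n = m + 2 := ⟨n - 2, by omega⟩
  obtain ⟨v, hv0, hv⟩ := exists_vecMul_eq_zero_iff.2 hV
  have hVv : V *ᵥ v ≠ 0 := fun h => hdet <| exists_mulVec_eq_zero_iff.1
    ⟨v, hv0, by rw [add_mulVec, smul_mulVec, mulVec_transpose, h, hv, smul_zero, add_zero]⟩
  obtain ⟨A, q, W, hA, hAV⟩ :=
    exists_linearIndependent_mul_mul_transpose_eq_singularNormalForm (m := m) hv hVv (by simp)
  set e : Fin 2 ⊕ Fin m ≃ Fin (m + 2) := finSumFinEquiv.trans (finCongr (by omega))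
  set P := (A.submatrix e.symm id)ᵀ
  have hP : IsUnit P.det := by
    rw [det_transpose, ← isUnit_iff_isUnit_det, ← linearIndependent_rows_iff_isUnit]
    exact hA.comp _ e.symm.injective
  have hPV : Pᵀ * V * P = reindex e e (singularNormalForm q W) := by
    ext i j
    rw [transpose_transpose, mul_mul_transpose_apply, reindex_apply, submatrix_apply, ← hAV,
      mul_mul_transpose_apply]
    rfl
  refine ⟨P, q, W, hP, hPV, fun hW => hdet ?_⟩
  have hcongr : Pᵀ * (V + ε • Vᵀ) * P =
      reindex e e (singularNormalForm q W + ε • (singularNormalForm q W)ᵀ) := by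
    rw [transpose_mul_add_smul_transpose_mul, hPV, transpose_reindex]
    ext i j
    simp
  have := congrArg det hcongr
  rw [det_mul, det_mul, det_transpose, det_reindex_self,
    det_singularNormalForm_add_smul_transpose, hW, mul_zero] at this
  simpa [hP.ne_zero] using this
end

section
/- Let k ≥ 1, let 0 ≤ m ≤ k, and let ε ∈ {1,−1}. Let M and N be free ℤ-modules of rank k, let S : N × M → ℤ be a ℤ-bilinear perfect pairing (i.e., the induced maps N → Hom(M,ℤ) and M → Hom(N,ℤ) are isomorphisms), and let p : M → N be a ℤ-linear map satisfying S(p(a), b) = ε·S(p(b), a) for all a, b ∈ M. Let α₁,…,α_k be a ℤ-basis of N such that: (i) for each i with 1 ≤ i ≤ m there is a nonzero integer qᵢ with qᵢ·αᵢ in the image of p; and (ii) every element of the image of p has a nonzero integer multiple lying in the ℤ-span of α₁,…,α_m. Let δ₁,…,δ_k be the basis of M dual to α₁,…,α_k under S, i.e., S(αᵢ, δⱼ) = 1 if i = j and 0 otherwise. Then the images of δ₁,…,δ_m under the quotient map M → M/ker(p) form a ℤ-basis of M/ker(p); in particular M/ker(p) is free of rank m. -/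
/-!
Every `x : M` expands as `x = ∑ⱼ S(αⱼ, x) • δⱼ`. The symmetry of `S(p ·, ·)` makes `ker p` the
`S`-orthogonal of `im p`. Since `im p` lies rationally in the span of `α₁, …, α_m`, this puts
`δⱼ` in `ker p` for `j > m`; since each `αᵢ` (`i ≤ m`) lies rationally in `im p`, the functional
`S(αᵢ, ·)` vanishes on `ker p`. So `δ₁, …, δ_m` span `M ⧸ ker p`, and the descended functionals
`S(αᵢ, ·)` are dual to them, which gives independence.
-/

open Submodule

section DualFamily

variable {R M ι κ : Type*} [CommRing R] [AddCommGroup M] [Module R M] [DecidableEq ι]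

theorem exists_basis_quotient_of_dual_family [Fintype ι] (δ : ι → M) (f : ι → M →ₗ[R] R)
    (hfδ : ∀ i j, f i (δ j) = if i = j then 1 else 0) (hexp : ∀ x, x = ∑ j, f j x • δ j)
    (K : Submodule R M) (e : κ → ι) (he : Function.Injective e)
    (hδK : ∀ j, j ∉ Set.range e → δ j ∈ K) (hfK : ∀ i, ∀ x ∈ K, f (e i) x = 0) :
    ∃ b : Module.Basis κ R (M ⧸ K), ∀ i, b i = K.mkQ (δ (e i)) := by
  classical
  let coord : M ⧸ K →ₗ[R] κ → R :=
    K.liftQ (LinearMap.pi fun i => f (e i)) fun x hx => by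
      simpa [funext_iff] using fun i => hfK i x hx
  have hli : LinearIndependent R fun i => K.mkQ (δ (e i)) := by
    refine LinearIndependent.of_comp coord ?_
    convert Pi.linearIndependent_single_one κ R using 1
    ext i j
    simp [coord, hfδ, he.eq_iff, Pi.single_apply, eq_comm]
  have hsp : ⊤ ≤ span R (Set.range fun i => K.mkQ (δ (e i))) := by
    rintro y -
    obtain ⟨x, rfl⟩ := K.mkQ_surjective y
    rw [hexp x, map_sum]
    refine sum_mem fun j _ => ?_
    rw [map_smul]
    by_cases hj : j ∈ Set.range e
    · obtain ⟨i, rfl⟩ := hj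
      exact smul_mem _ _ (subset_span ⟨i, rfl⟩)
    · simp [(Quotient.mk_eq_zero K).mpr (hδK j hj)]
  exact ⟨.mk hli hsp, fun i => Module.Basis.mk_apply hli hsp i⟩

end DualFamily

section Pairing

variable {R M N ι : Type*} [CommRing R] [AddCommGroup M] [Module R M] [AddCommGroup N]
  [Module R N] (S : N →ₗ[R] M →ₗ[R] R)

theorem eq_sum_pairing_smul_of_dual [Fintype ι] [DecidableEq ι]
    (hS' : Function.Injective S.flip) (α : Module.Basis ι R N) (δ : ι → M)
    (hδ : ∀ i j, S (α i) (δ j) = if i = j then 1 else 0) (x : M) :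
    x = ∑ j, S (α j) x • δ j := by
  refine (sub_eq_zero.mp (hS'.eq_iff.mp ?_)).symm
  refine α.ext fun i => ?_
  simp [map_sum, hδ]

theorem mem_ker_iff_forall_pairing_eq_zero (hS : Function.Injective S) (p : M →ₗ[R] N)
    (ε : R) (hsym : ∀ a b, S (p a) b = ε * S (p b) a) (x : M) :
    x ∈ LinearMap.ker p ↔ ∀ b, S (p b) x = 0 := by
  refine ⟨fun hx b => by simp [hsym b x, LinearMap.mem_ker.mp hx], fun h => ?_⟩
  refine LinearMap.mem_ker.mpr (hS.eq_iff.mp ?_)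
  ext b
  simp [hsym x b, h b]

variable [NoZeroDivisors R]

theorem pairing_eq_zero_of_smul_mem_range (p : M →ₗ[R] N) (ε : R)
    (hsym : ∀ a b, S (p a) b = ε * S (p b) a) {y : N} {q : R} (hq : q ≠ 0)
    (hqy : q • y ∈ LinearMap.range p) {x : M} (hx : x ∈ LinearMap.ker p) : S y x = 0 := by
  obtain ⟨a, ha⟩ := hqy
  have : q * S y x = 0 := by
    simpa [ha, LinearMap.mem_ker.mp hx] using hsym a x
  exact (mul_eq_zero.mp this).resolve_left hq

theorem dual_mem_ker_of_range_smul_mem_span {κ : Type*} [DecidableEq ι] (hS : Function.Injective S)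
    (p : M →ₗ[R] N) (ε : R) (hsym : ∀ a b, S (p a) b = ε * S (p b) a) (α : ι → N) (δ : ι → M)
    (hδ : ∀ i j, S (α i) (δ j) = if i = j then 1 else 0) (e : κ → ι)
    (hspan : ∀ x ∈ LinearMap.range p, ∃ q : R, q ≠ 0 ∧ q • x ∈ span R (Set.range fun i => α (e i)))
    {j : ι} (hj : j ∉ Set.range e) : δ j ∈ LinearMap.ker p := by
  refine (mem_ker_iff_forall_pairing_eq_zero S hS p ε hsym _).mpr fun b => ?_
  obtain ⟨q, hq, hqb⟩ := hspan (p b) ⟨b, rfl⟩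
  have hle : span R (Set.range fun i => α (e i)) ≤ LinearMap.ker (S.flip (δ j)) := by
    refine span_le.mpr ?_
    rintro _ ⟨i, rfl⟩
    have : e i ≠ j := fun h => hj ⟨i, h⟩
    simp [hδ, this]
  have : q * S (p b) (δ j) = 0 := by simpa using hle hqb
  exact (mul_eq_zero.mp this).resolve_left hq

end Pairing

theorem dual_basis_of_coimage_general (k m : ℕ) (hm : m ≤ k)
    (ε : ℤ)
    (M N : Type) [AddCommGroup M] [Module ℤ M] [AddCommGroup N] [Module ℤ N]
    (S : N →ₗ[ℤ] M →ₗ[ℤ] ℤ)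
    (hS : Function.Bijective S) (hS' : Function.Bijective S.flip)
    (p : M →ₗ[ℤ] N)
    (hsym : ∀ a b : M, S (p a) b = ε * S (p b) a)
    (α : Module.Basis (Fin k) ℤ N)
    (hmult : ∀ i : Fin k, (i : ℕ) < m → ∃ q : ℤ, q ≠ 0 ∧ q • α i ∈ LinearMap.range p)
    (hspan : ∀ x ∈ LinearMap.range p, ∃ q : ℤ, q ≠ 0 ∧
      q • x ∈ Submodule.span ℤ (Set.range fun i : Fin m => α (Fin.castLE hm i)))
    (δ : Fin k → M)
    (hδ : ∀ i j : Fin k, S (α i) (δ j) = if i = j then 1 else 0) :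
    ∃ b : Module.Basis (Fin m) ℤ (M ⧸ LinearMap.ker p),
      ∀ i : Fin m, b i = (LinearMap.ker p).mkQ (δ (Fin.castLE hm i)) := by
  -- `q • x` and the `ℤ`-module `M ⧸ ker p` in the statement use the `zsmul` structures
  obtain rfl : ‹Module ℤ N› = AddCommGroup.toIntModule N := Subsingleton.elim _ _
  obtain rfl : ‹Module ℤ M› = AddCommGroup.toIntModule M := Subsingleton.elim _ _
  refine exists_basis_quotient_of_dual_family δ (fun i => S (α i)) hδ
    (eq_sum_pairing_smul_of_dual S hS'.injective α δ hδ) (LinearMap.ker p) (Fin.castLE hm)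
    (Fin.castLE_injective hm)
    (fun j hj => dual_mem_ker_of_range_smul_mem_span S hS.injective p ε hsym α δ hδ _ hspan hj)
    fun i x hx => ?_
  obtain ⟨q, hq, hqα⟩ := hmult (Fin.castLE hm i) (by simp)
  exact pairing_eq_zero_of_smul_mem_range S p ε hsym hq hqα hx

/-- Let `S : N × M → ℤ` be a perfect pairing of free `ℤ`-modules of rank `k`, and let
`p : M → N` satisfy `S(p a, b) = ε · S(p b, a)` with `ε = ±1`. Given a basis `α` of `N`
such that each `αᵢ` (`i < m`) has a nonzero multiple in the image of `p`, and every
element of the image of `p` has a nonzero multiple in the span of `α₁, …, α_m`, the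
images under `M → M ⧸ ker p` of the first `m` elements of the basis `δ` of `M` dual to
`α` form a `ℤ`-basis of `M ⧸ ker p`. -/
theorem dual_basis_of_coimage (k m : ℕ) (hk : 1 ≤ k) (hm : m ≤ k)
    (ε : ℤ) (hε : ε = 1 ∨ ε = -1)
    (M N : Type) [AddCommGroup M] [Module ℤ M] [AddCommGroup N] [Module ℤ N]
    (βM : Module.Basis (Fin k) ℤ M)
    (S : N →ₗ[ℤ] M →ₗ[ℤ] ℤ)
    (hS : Function.Bijective S) (hS' : Function.Bijective S.flip)
    (p : M →ₗ[ℤ] N)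
    (hsym : ∀ a b : M, S (p a) b = ε * S (p b) a)
    (α : Module.Basis (Fin k) ℤ N)
    (hmult : ∀ i : Fin k, (i : ℕ) < m → ∃ q : ℤ, q ≠ 0 ∧ q • α i ∈ LinearMap.range p)
    (hspan : ∀ x ∈ LinearMap.range p, ∃ q : ℤ, q ≠ 0 ∧
      q • x ∈ Submodule.span ℤ (Set.range fun i : Fin m => α (Fin.castLE hm i)))
    (δ : Fin k → M)
    (hδ : ∀ i j : Fin k, S (α i) (δ j) = if i = j then 1 else 0) :
    ∃ b : Module.Basis (Fin m) ℤ (M ⧸ LinearMap.ker p),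
      ∀ i : Fin m, b i = (LinearMap.ker p).mkQ (δ (Fin.castLE hm i)) :=
  dual_basis_of_coimage_general k m hm ε M N S hS hS' p hsym α hmult hspan δ hδ
end

section
/- Let k ≥ 1, let 0 ≤ m ≤ k, and let ε ∈ {1,−1}. Let M and N be free ℤ-modules of rank k, let S : N × M → ℤ be a ℤ-bilinear perfect pairing, and let p : M → N be a ℤ-linear map satisfying S(p(a), b) = ε·S(p(b), a) for all a, b ∈ M. Let α₁,…,α_k be a ℤ-basis of N such that: (i) for each i with 1 ≤ i ≤ m there is a nonzero integer qᵢ with qᵢ·αᵢ in the image of p; and (ii) every element of the image of p has a nonzero integer multiple lying in the ℤ-span of α₁,…,α_m. Let δ₁,…,δ_k be the basis of M dual to α₁,…,α_k under S, i.e., S(αᵢ, δⱼ) = 1 if i = j and 0 otherwise. Then δⱼ ∈ ker(p) for every j with m < j ≤ k. -/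
/-! For `j ≥ m`, the functional `S(·, δⱼ)` kills `α₁, …, α_m`, hence, `ℤ` being torsion-free,
all of `im p`. The symmetry of `S ∘ p` turns this into `S(p δⱼ, ·) = 0`, and since the
`α`-coordinates of `p δⱼ` are the values `S(p δⱼ, δᵢ)`, this forces `p δⱼ = 0`. -/

namespace Module.Basis

variable {ι R M N : Type*} [CommSemiring R] [AddCommMonoid M] [Module R M]
  [AddCommMonoid N] [Module R N] [DecidableEq ι]
  (α : Basis ι R N) (S : N →ₗ[R] M →ₗ[R] R) {δ : ι → M}

theorem pairing_dual_eq_repr (hδ : ∀ i j, S (α i) (δ j) = if i = j then 1 else 0)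
    (x : N) (i : ι) : S x (δ i) = α.repr x i := by
  have hfun : S.flip (δ i) = Finsupp.lapply i ∘ₗ α.repr :=
    α.ext fun l => by simp [hδ, Finsupp.single_apply]
  exact LinearMap.congr_fun hfun x

theorem eq_zero_of_pairing_dual_eq_zero (hδ : ∀ i j, S (α i) (δ j) = if i = j then 1 else 0)
    {x : N} (hx : ∀ i, S x (δ i) = 0) : x = 0 := by
  refine α.repr.injective (Finsupp.ext fun i => ?_)
  rw [← pairing_dual_eq_repr α S hδ, hx, map_zero, Finsupp.coe_zero, Pi.zero_apply]

theorem pairing_dual_eq_zero_of_smul_mem_span [NoZeroDivisors R] {κ : Type*}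
    (hδ : ∀ i j, S (α i) (δ j) = if i = j then 1 else 0) {f : κ → ι} {j : ι}
    (hj : j ∉ Set.range f) {x : N} {q : R} (hq : q ≠ 0)
    (hx : q • x ∈ Submodule.span R (Set.range fun i => α (f i))) : S x (δ j) = 0 := by
  have hker : Submodule.span R (Set.range fun i => α (f i)) ≤ LinearMap.ker (S.flip (δ j)) := by
    refine Submodule.span_le.mpr ?_
    rintro _ ⟨i, rfl⟩
    have hij : f i ≠ j := fun h => hj ⟨i, h⟩
    simp [hδ, hij]
  have hqx : q * S x (δ j) = 0 := by simpa using hker hx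
  exact (mul_eq_zero.mp hqx).resolve_left hq

end Module.Basis

theorem dual_basis_tail_in_kernel_general (k m : ℕ) (hm : m ≤ k)
    (ε : ℤ)
    (M N : Type) [AddCommGroup M] [Module ℤ M] [AddCommGroup N] [Module ℤ N]
    (S : N →ₗ[ℤ] M →ₗ[ℤ] ℤ)
    (p : M →ₗ[ℤ] N)
    (hsym : ∀ a b : M, S (p a) b = ε * S (p b) a)
    (α : Module.Basis (Fin k) ℤ N)
    (hspan : ∀ x ∈ LinearMap.range p, ∃ q : ℤ, q ≠ 0 ∧
      q • x ∈ Submodule.span ℤ (Set.range fun i : Fin m => α (Fin.castLE hm i)))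
    (δ : Fin k → M)
    (hδ : ∀ i j : Fin k, S (α i) (δ j) = if i = j then 1 else 0) :
    ∀ j : Fin k, m ≤ (j : ℕ) → δ j ∈ LinearMap.ker p := by
  intro j hj
  have hj_tail : j ∉ Set.range (Fin.castLE hm) := by
    rintro ⟨i, rfl⟩
    exact absurd hj (not_le.mpr i.isLt)
  have hperp : ∀ a, S (p a) (δ j) = 0 := fun a => by
    obtain ⟨q, hq, hmem⟩ := hspan (p a) (LinearMap.mem_range_self p a)
    -- `hspan` elaborates `q • x` with the `zsmul` action of `AddCommGroup N`, not `Module ℤ N`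
    rw [← int_smul_eq_zsmul ‹Module ℤ N›] at hmem
    exact α.pairing_dual_eq_zero_of_smul_mem_span S hδ hj_tail hq hmem
  exact α.eq_zero_of_pairing_dual_eq_zero S hδ fun i => by rw [hsym, hperp, mul_zero]

/-- Let `S : N × M → ℤ` be a perfect pairing of free `ℤ`-modules of rank `k`, and let
`p : M → N` satisfy `S(p a, b) = ε · S(p b, a)` with `ε = ±1`. Given a basis `α` of `N`
such that each `αᵢ` (`i < m`) has a nonzero multiple in the image of `p`, and every
element of the image of `p` has a nonzero multiple in the span of `α₁, …, α_m`, the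
elements of the dual basis `δ` of `M` beyond index `m` lie in the kernel of `p`. -/
theorem dual_basis_tail_in_kernel (k m : ℕ) (hk : 1 ≤ k) (hm : m ≤ k)
    (ε : ℤ) (hε : ε = 1 ∨ ε = -1)
    (M N : Type) [AddCommGroup M] [Module ℤ M] [AddCommGroup N] [Module ℤ N]
    (βM : Module.Basis (Fin k) ℤ M)
    (S : N →ₗ[ℤ] M →ₗ[ℤ] ℤ)
    (hS : Function.Bijective S) (hS' : Function.Bijective S.flip)
    (p : M →ₗ[ℤ] N)
    (hsym : ∀ a b : M, S (p a) b = ε * S (p b) a)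
    (α : Module.Basis (Fin k) ℤ N)
    (hmult : ∀ i : Fin k, (i : ℕ) < m → ∃ q : ℤ, q ≠ 0 ∧ q • α i ∈ LinearMap.range p)
    (hspan : ∀ x ∈ LinearMap.range p, ∃ q : ℤ, q ≠ 0 ∧
      q • x ∈ Submodule.span ℤ (Set.range fun i : Fin m => α (Fin.castLE hm i)))
    (δ : Fin k → M)
    (hδ : ∀ i j : Fin k, S (α i) (δ j) = if i = j then 1 else 0) :
    ∀ j : Fin k, m ≤ (j : ℕ) → δ j ∈ LinearMap.ker p :=
  dual_basis_tail_in_kernel_general k m hm ε M N S p hsym α hspan δ hδ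
end

section
/- Let Λ = ℤ[t, t⁻¹] be the ring of Laurent polynomials over ℤ, let Q(Λ) be its field of fractions, and regard Q(Λ)/Λ (the quotient of Q(Λ) by the image of Λ) as a Λ-module. Let ev₁ : Λ → ℤ be the unique ring homomorphism sending t to 1. Let H be a Λ-module and Δ ∈ Λ with ev₁(Δ) = 1 or ev₁(Δ) = −1 such that Δ·h = 0 for all h ∈ H, and let m be a nonzero integer. If y : H → Q(Λ)/Λ is a Λ-linear map with m·y = 0, then y = 0. -/
open LaurentPolynomial

section Aux

open Polynomial

/-- If `C p` divides `toLaurent F` in Laurent polynomials, then `Polynomial.C p` divides `F`. -/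
private lemma polyC_dvd_of_laurentC_dvd {p : ℤ} (hp : Prime p) {F : ℤ[X]}
    (h : (LaurentPolynomial.C p : LaurentPolynomial ℤ) ∣ Polynomial.toLaurent F) :
    Polynomial.C p ∣ F := by
  obtain ⟨g, hg⟩ := h
  obtain ⟨n, G, hG⟩ := g.exists_T_pow
  have hpC : Prime (Polynomial.C p) := Polynomial.prime_C_iff.mpr hp
  have key : Polynomial.toLaurent (F * X ^ n) = Polynomial.toLaurent (Polynomial.C p * G) := by
    rw [map_mul, map_mul, Polynomial.toLaurent_X_pow, Polynomial.toLaurent_C, hG, hg, mul_assoc]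
  have hFX : F * X ^ n = Polynomial.C p * G := Polynomial.toLaurent_injective key
  have hdvd : Polynomial.C p ∣ F * X ^ n := ⟨G, hFX⟩
  rcases hpC.2.2 _ _ hdvd with h1 | h1
  · exact h1
  · exfalso
    have hX : Polynomial.C p ∣ (X : ℤ[X]) := hpC.dvd_of_dvd_pow h1
    obtain ⟨k, hk⟩ := hX
    have h1 : (1 : ℤ) = p * k.coeff 1 := by
      have := congrArg (fun q => Polynomial.coeff q 1) hk
      simpa using this
    exact hp.not_unit (isUnit_of_dvd_one ⟨_, h1⟩)

/-- `C p` is prime in `ℤ[T,T⁻¹]` for a prime integer `p`. -/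
private lemma prime_laurentC {p : ℤ} (hp : Prime p) :
    Prime (LaurentPolynomial.C p : LaurentPolynomial ℤ) := by
  refine ⟨?_, ?_, ?_⟩
  · rw [← Polynomial.toLaurent_C, Ne, Polynomial.toLaurent_eq_zero]
    exact Polynomial.C_ne_zero.mpr hp.ne_zero
  · intro hu
    have h1 : (LaurentPolynomial.C p : LaurentPolynomial ℤ) ∣ Polynomial.toLaurent 1 := by
      simpa using hu.dvd
    have h2 := polyC_dvd_of_laurentC_dvd hp h1
    exact hp.not_unit (Polynomial.isUnit_C.mp (isUnit_of_dvd_one h2))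
  · intro a b hab
    obtain ⟨n, A, hA⟩ := a.exists_T_pow
    obtain ⟨k, B, hB⟩ := b.exists_T_pow
    have hAB : (LaurentPolynomial.C p : LaurentPolynomial ℤ) ∣ Polynomial.toLaurent (A * B) := by
      rw [map_mul, hA, hB, mul_mul_mul_comm]
      exact hab.mul_right _
    have hpC : Prime (Polynomial.C p) := Polynomial.prime_C_iff.mpr hp
    rcases hpC.2.2 _ _ (polyC_dvd_of_laurentC_dvd hp hAB) with h1 | h1
    · left
      have : (LaurentPolynomial.C p : LaurentPolynomial ℤ) ∣ Polynomial.toLaurent A := by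
        rw [← Polynomial.toLaurent_C]; exact map_dvd _ h1
      rw [hA] at this
      have hT : IsUnit (T n : LaurentPolynomial ℤ) := isUnit_T n
      exact hT.dvd_mul_right.mp this
    · right
      have : (LaurentPolynomial.C p : LaurentPolynomial ℤ) ∣ Polynomial.toLaurent B := by
        rw [← Polynomial.toLaurent_C]; exact map_dvd _ h1
      rw [hB] at this
      have hT : IsUnit (T k : LaurentPolynomial ℤ) := isUnit_T k
      exact hT.dvd_mul_right.mp this

/-- The key divisibility lemma: if `Δ` is not divisible by any integer prime and
`C m ∣ Δ * a`, then `C m ∣ a`. -/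
private lemma laurent_int_dvd {Δ : LaurentPolynomial ℤ}
    (hΔ : ∀ p : ℤ, Prime p → ¬ ((LaurentPolynomial.C p : LaurentPolynomial ℤ) ∣ Δ)) :
    ∀ (n : ℕ) (m : ℤ), m.natAbs = n → m ≠ 0 →
      ∀ a : LaurentPolynomial ℤ,
        (LaurentPolynomial.C m : LaurentPolynomial ℤ) ∣ Δ * a →
        (LaurentPolynomial.C m : LaurentPolynomial ℤ) ∣ a := by
  intro n
  induction n using Nat.strong_induction_on with
  | _ n ih =>
    intro m hmn hm a hdvd
    by_cases hu : IsUnit m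
    · exact (hu.map (LaurentPolynomial.C : ℤ →+* LaurentPolynomial ℤ)).dvd
    · have hna : m.natAbs ≠ 1 := fun h => hu (Int.isUnit_iff.mpr
        (by rcases Int.natAbs_eq_iff.mp h with h' | h' <;> simp [h']))
      obtain ⟨p, hp, hpm⟩ := Int.exists_prime_and_dvd hna
      obtain ⟨m', rfl⟩ := hpm
      have hp' : Prime (LaurentPolynomial.C p : LaurentPolynomial ℤ) := prime_laurentC hp
      have hpa : (LaurentPolynomial.C p : LaurentPolynomial ℤ) ∣ a := by
        have h1 : (LaurentPolynomial.C p : LaurentPolynomial ℤ) ∣ Δ * a := by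
          refine dvd_trans ?_ hdvd
          rw [map_mul]; exact dvd_mul_right _ _
        rcases hp'.2.2 _ _ h1 with h | h
        · exact absurd h (hΔ p hp)
        · exact h
      obtain ⟨a', rfl⟩ := hpa
      have hm' : m' ≠ 0 := by rintro rfl; simp at hm
      have hlt : m'.natAbs < n := by
        rw [← hmn, Int.natAbs_mul]
        have : 2 ≤ p.natAbs := (Int.prime_iff_natAbs_prime.mp hp).two_le
        have h0 : 0 < m'.natAbs := Int.natAbs_pos.mpr hm'
        nlinarith
      have hdvd' : (LaurentPolynomial.C m' : LaurentPolynomial ℤ) ∣ Δ * a' := by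
        have hcancel : (LaurentPolynomial.C p : LaurentPolynomial ℤ) *
            (LaurentPolynomial.C m' : LaurentPolynomial ℤ) ∣
            (LaurentPolynomial.C p : LaurentPolynomial ℤ) * (Δ * a') := by
          rw [← map_mul]
          calc (LaurentPolynomial.C (p * m') : LaurentPolynomial ℤ)
              ∣ Δ * (LaurentPolynomial.C p * a') := hdvd
            _ = LaurentPolynomial.C p * (Δ * a') := by ring
        obtain ⟨c, hc⟩ := hcancel
        refine ⟨c, mul_left_cancel₀ hp'.ne_zero ?_⟩
        rw [hc]; ring
      have := ih _ hlt m' rfl hm' a' hdvd'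
      obtain ⟨a'', ha''⟩ := this
      exact ⟨a'', by rw [map_mul, ha'']; ring⟩

end Aux

set_option synthInstance.maxHeartbeats 1000000
set_option maxHeartbeats 2000000

/-- Let `Λ = ℤ[t,t⁻¹]`, `Q(Λ)` its fraction field, and `Q(Λ)/Λ` the quotient `Λ`-module.
If `H` is a `Λ`-module annihilated by some `Δ ∈ Λ` with `Δ(1) = ±1`, and `m` is a nonzero
integer, then any `Λ`-linear map `y : H → Q(Λ)/Λ` with `m·y = 0` is zero. -/
theorem hom_to_quotient_vanishes
    (ev : LaurentPolynomial ℤ →+* ℤ) (hev : ev (LaurentPolynomial.T 1) = 1)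
    (H : Type) [AddCommGroup H] [Module (LaurentPolynomial ℤ) H]
    (Δ : LaurentPolynomial ℤ) (hΔ : ev Δ = 1 ∨ ev Δ = -1)
    (hann : ∀ h : H, Δ • h = 0)
    (m : ℤ) (hm : m ≠ 0)
    (y : H →ₗ[LaurentPolynomial ℤ]
      (FractionRing (LaurentPolynomial ℤ) ⧸
        LinearMap.range (Algebra.linearMap (LaurentPolynomial ℤ)
          (FractionRing (LaurentPolynomial ℤ)))))
    (hy : ∀ h : H, m • y h = 0) :
    y = 0 := by
  classical
  have hinj : Function.Injective (algebraMap (LaurentPolynomial ℤ) (FractionRing (LaurentPolynomial ℤ))) :=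
    IsFractionRing.injective _ _
  -- Δ is not divisible by any prime integer
  have hΔp : ∀ p : ℤ, Prime p → ¬ ((LaurentPolynomial.C p : LaurentPolynomial ℤ) ∣ Δ) := by
    rintro p hp ⟨g, hg⟩
    have hevC : ∀ r : ℤ, ev (LaurentPolynomial.C r) = r := by
      intro r
      have := eq_intCast (ev.comp LaurentPolynomial.C) r
      simpa using this
    have hdvd : p ∣ ev Δ := ⟨ev g, by rw [hg, map_mul, hevC]⟩
    rcases hΔ with h | h <;> rw [h] at hdvd
    · exact hp.not_unit (isUnit_of_dvd_one hdvd)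
    · exact hp.not_unit (isUnit_of_dvd_unit hdvd isUnit_one.neg)
  ext h
  obtain ⟨q, hq⟩ := Submodule.Quotient.mk_surjective
    (LinearMap.range (Algebra.linearMap (LaurentPolynomial ℤ) (FractionRing (LaurentPolynomial ℤ)))) (y h)
  have hmq : ((m : LaurentPolynomial ℤ) • q) ∈
      LinearMap.range (Algebra.linearMap (LaurentPolynomial ℤ) (FractionRing (LaurentPolynomial ℤ))) := by
    rw [← Submodule.Quotient.mk_eq_zero]
    have h1 : ((m : LaurentPolynomial ℤ) • q) = m • q :=
      Int.cast_smul_eq_zsmul (LaurentPolynomial ℤ) m q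
    rw [h1, ← Submodule.mkQ_apply, map_zsmul, Submodule.mkQ_apply, hq]
    exact hy h
  have hΔq : (Δ • q) ∈
      LinearMap.range (Algebra.linearMap (LaurentPolynomial ℤ) (FractionRing (LaurentPolynomial ℤ))) := by
    rw [← Submodule.Quotient.mk_eq_zero, Submodule.Quotient.mk_smul, hq, ← map_smul, hann, map_zero]
  obtain ⟨a, ha⟩ := hmq
  obtain ⟨b, hb⟩ := hΔq
  simp only [Algebra.linearMap_apply] at ha hb
  -- Δ * a = m * b in Λ
  have hsd : ∀ (r : LaurentPolynomial ℤ) (x : FractionRing (LaurentPolynomial ℤ)),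
      r • x = algebraMap (LaurentPolynomial ℤ) (FractionRing (LaurentPolynomial ℤ)) r * x :=
    fun r x => Algebra.smul_def r x
  have hkey : Δ * a = (m : LaurentPolynomial ℤ) * b := by
    apply hinj
    rw [map_mul, map_mul, ha, hb, hsd, hsd]
    ring
  have hCm : (LaurentPolynomial.C m : LaurentPolynomial ℤ) = (m : LaurentPolynomial ℤ) :=
    eq_intCast (LaurentPolynomial.C : ℤ →+* LaurentPolynomial ℤ) m
  have hdvd : (LaurentPolynomial.C m : LaurentPolynomial ℤ) ∣ Δ * a := by
    rw [hCm, hkey]; exact dvd_mul_right _ _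
  obtain ⟨a', ha'⟩ := laurent_int_dvd hΔp m.natAbs m rfl hm a hdvd
  rw [hCm] at ha'
  have hmΛ : ((m : LaurentPolynomial ℤ)) ≠ 0 := by
    rw [← hCm, ← Polynomial.toLaurent_C, Ne, Polynomial.toLaurent_eq_zero]
    exact Polynomial.C_ne_zero.mpr hm
  have hmK : algebraMap (LaurentPolynomial ℤ) (FractionRing (LaurentPolynomial ℤ))
      (m : LaurentPolynomial ℤ) ≠ 0 := fun h0 => hmΛ (hinj (by rw [h0, map_zero]))
  have hq' : q = algebraMap (LaurentPolynomial ℤ) (FractionRing (LaurentPolynomial ℤ)) a' := by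
    have h1 : algebraMap (LaurentPolynomial ℤ) (FractionRing (LaurentPolynomial ℤ)) (m : LaurentPolynomial ℤ) * q
        = algebraMap (LaurentPolynomial ℤ) (FractionRing (LaurentPolynomial ℤ)) (m : LaurentPolynomial ℤ)
          * algebraMap (LaurentPolynomial ℤ) (FractionRing (LaurentPolynomial ℤ)) a' := by
      rw [← map_mul, ← ha', ha, hsd]
    exact mul_left_cancel₀ hmK h1
  have hy0 : y h = 0 := by
    rw [← hq, hq']
    exact (Submodule.Quotient.mk_eq_zero _).mpr ⟨a', rfl⟩
  simpa using hy0
end
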